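/- arXiv:2012.04820 — 2 statements merged into one kernel-verified Lean document; each statement's English description precedes it below -/
import Mathlib

section
/- For a connected graph G on n ≥ 2 vertices, cfc(G) = n−1 if and only if α(G) = n−1 (equivalently, if and only if G is the star K_{1,n−1}). -/
open SimpleGraph

/-- An edge coloring `c` makes `G` conflict-free connected: every two distinct
vertices are joined by a path containing a color used on exactly one of its edges. -/
def IsCFConnColoring {V : Type*} (G : SimpleGraph V) (c : Sym2 V → ℕ) : Prop :=
  ∀ u v : V, u ≠ v → ∃ p : G.Walk u v, p.IsPath ∧
    ∃ col : ℕ, (p.edges.filter (fun e => c e = col)).length = 1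

/-- The conflict-free connection number: the minimum number of colors in a
conflict-free connection coloring. -/
noncomputable def cfcNum {V : Type*} (G : SimpleGraph V) : ℕ :=
  sInf {k | ∃ c : Sym2 V → ℕ, (∀ e, c e < k) ∧ IsCFConnColoring G c}

/-- The independence number: the maximum size of a set of pairwise non-adjacent vertices. -/
noncomputable def indepNum {V : Type*} [Fintype V] (G : SimpleGraph V) : ℕ :=
  sSup {n | ∃ s : Finset V, (↑s : Set V).Pairwise (fun a b => ¬ G.Adj a b) ∧ s.card = n}

/-!
In a star the only path between two leaves is leaf–centre–leaf, so the `n - 1` edges at the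
centre need pairwise distinct colours, and `n - 1` colours clearly suffice.

A connected graph `G` that is not a star can be coloured with `n - 2` colours. Take a spanning
tree `T`. If `T` has two disjoint edges, colour the `n - 1` edges of `T` injectively except that
these two share a colour: a path of `T` through both of them has a third edge, whose colour is
unique on it. Otherwise `T` is a star centred at some `v`, and `G` has an edge `xy` between two
leaves; colour the edges at `v` injectively except that `vx` and `vy` share a colour, and join
`x` to `y` by the edge `xy`.

Finally, if `α(G) = n - 1`, every edge meets the single vertex outside a maximum independent
set, so connectedness makes `G` a star; conversely the leaves of a star are independent.
-/

open Finset

def IsStarCenter {V : Type*} (G : SimpleGraph V) (v : V) : Prop :=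
  ∀ x y, G.Adj x y ↔ (x = v ∨ y = v) ∧ x ≠ y

namespace List

variable {α : Type*}

lemma length_filter_eq_one_of_forall_eq {L : List α} (hL : L.Nodup) {c : α → ℕ} {a : α}
    (ha : a ∈ L) (huniq : ∀ b ∈ L, c b = c a → b = a) :
    (L.filter (fun e => c e = c a)).length = 1 := by
  classical
  rw [← count_eq_one_of_mem hL ha, count, countP_eq_length_filter]
  congr 1
  refine filter_congr fun b hb => ?_
  exact Bool.eq_iff_iff.2 (by simpa using ⟨huniq b hb, fun h => h ▸ rfl⟩)

lemma exists_mem_ne_ne_of_three_le_length {L : List α} (hL : L.Nodup) (hlen : 3 ≤ L.length)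
    (a b : α) : ∃ e ∈ L, e ≠ a ∧ e ≠ b := by
  classical
  obtain ⟨e, he, hab⟩ := Finset.exists_mem_notMem_of_card_lt_card (s := {a, b})
    (t := L.toFinset) (by rw [toFinset_card_of_nodup hL]; exact card_le_two.trans_lt hlen)
  simp only [Finset.mem_insert, Finset.mem_singleton, not_or] at hab
  exact ⟨e, mem_toFinset.1 he, hab⟩

lemma exists_length_filter_eq_one {L : List α} (hL : L.Nodup) (hne : L ≠ []) {c : α → ℕ}
    {e₁ e₂ : α} (hc : ∀ e ∈ L, ∀ f ∈ L, c e = c f → e = f ∨ s(e, f) = s(e₁, e₂))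
    (hlen : e₁ ∈ L → e₂ ∈ L → 3 ≤ L.length) :
    ∃ col, (L.filter (fun e => c e = col)).length = 1 := by
  obtain ⟨e, he, hpair⟩ : ∃ e ∈ L, ∀ f ∈ L, s(f, e) ≠ s(e₁, e₂) := by
    by_cases h : e₁ ∈ L ∧ e₂ ∈ L
    · obtain ⟨e, he, he₁, he₂⟩ := exists_mem_ne_ne_of_three_le_length hL (hlen h.1 h.2) e₁ e₂
      refine ⟨e, he, fun f _ hfe => ?_⟩
      rcases Sym2.eq_iff.1 hfe with ⟨-, rfl⟩ | ⟨-, rfl⟩ <;> contradiction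
    · obtain ⟨e, he⟩ := exists_mem_of_ne_nil L hne
      refine ⟨e, he, fun f hf hfe => h ?_⟩
      rcases Sym2.eq_iff.1 hfe with ⟨rfl, rfl⟩ | ⟨rfl, rfl⟩
      exacts [⟨hf, he⟩, ⟨he, hf⟩]
  exact ⟨c e, length_filter_eq_one_of_forall_eq hL he fun f hf hcf =>
    (hc f hf e he hcf).resolve_right (hpair f hf)⟩

end List

namespace Finset

variable {α : Type*}

lemma exists_injOn_lt_card (S : Finset α) (hS : S.Nonempty) :
    ∃ φ : α → ℕ, (∀ a, φ a < #S) ∧ Set.InjOn φ S := by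
  classical
  refine ⟨fun a => if h : a ∈ S then S.equivFin ⟨a, h⟩ else 0, fun a => ?_,
    fun a ha b hb hab => ?_⟩
  · dsimp only
    split
    exacts [Fin.isLt _, hS.card_pos]
  · simp only [mem_coe] at ha hb
    exact congrArg Subtype.val
      (S.equivFin.injective (Fin.val_injective (by simpa [ha, hb] using hab)))

lemma exists_lt_card_eq_or_pair [DecidableEq α] (S : Finset α) {e₁ : α} (h₁ : e₁ ∈ S) (e₂ : α) :
    ∃ c : α → ℕ, (∀ a, c a < #S) ∧
      ∀ e ∈ insert e₂ S, ∀ f ∈ insert e₂ S, c e = c f → e = f ∨ s(e, f) = s(e₁, e₂) := by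
  obtain ⟨φ, hφlt, hφ⟩ := S.exists_injOn_lt_card ⟨e₁, h₁⟩
  refine ⟨fun a => φ (if a = e₂ then e₁ else a), fun a => hφlt _, fun e he f hf hef => ?_⟩
  have hmem : ∀ a ∈ insert e₂ S, (if a = e₂ then e₁ else a) ∈ S := fun a ha => by
    split_ifs with h
    exacts [h₁, (mem_insert.1 ha).resolve_left h]
  have := hφ (hmem e he) (hmem f hf) hef
  by_cases he₂ : e = e₂ <;> by_cases hf₂ : f = e₂ <;> simp_all [Sym2.eq_swap]

end Finset

namespace SimpleGraph

variable {V : Type*} {G : SimpleGraph V}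

lemma Connected.exists_adj_of_ne (hG : G.Connected) {u r : V} (hur : u ≠ r) : ∃ w, G.Adj u w := by
  obtain ⟨p⟩ := hG.preconnected u r
  cases p with
  | nil => exact absurd rfl hur
  | cons h _ => exact ⟨_, h⟩

lemma Connected.forall_adj_of_forall_adj_imp (hG : G.Connected) {v : V}
    (h : ∀ x y, G.Adj x y → x = v ∨ y = v) (u : V) (hu : u ≠ v) : G.Adj v u := by
  obtain ⟨w, huw⟩ := hG.exists_adj_of_ne hu
  obtain rfl := (h u w huw).resolve_left hu
  exact huw.symm

lemma Connected.isStarCenter_of_forall_adj_imp (hG : G.Connected) {v : V}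
    (h : ∀ x y, G.Adj x y → x = v ∨ y = v) : IsStarCenter G v := by
  refine fun x y => ⟨fun hxy => ⟨h x y hxy, hxy.ne⟩, ?_⟩
  rintro ⟨rfl | rfl, hxy⟩
  exacts [hG.forall_adj_of_forall_adj_imp h y hxy.symm,
    (hG.forall_adj_of_forall_adj_imp h x hxy).symm]

/-- A connected graph in which every two edges share a vertex is a star or a triangle. -/
lemma Connected.exists_forall_adj_of_edges_meet (hG : G.Connected)
    (hmeet : ∀ a b a' b', G.Adj a b → G.Adj a' b' → a = a' ∨ a = b' ∨ b = a' ∨ b = b') :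
    ∃ v, ∀ u, u ≠ v → G.Adj v u := by
  by_cases hedge : ∃ a b, G.Adj a b
  swap
  · obtain ⟨v⟩ := hG.nonempty
    exact ⟨v, fun u hu => absurd ⟨u, hG.exists_adj_of_ne hu⟩ hedge⟩
  obtain ⟨a, b, hab⟩ := hedge
  by_cases ha : ∀ x y, G.Adj x y → x = a ∨ y = a
  · exact ⟨a, hG.forall_adj_of_forall_adj_imp ha⟩
  by_cases hb : ∀ x y, G.Adj x y → x = b ∨ y = b
  · exact ⟨b, hG.forall_adj_of_forall_adj_imp hb⟩
  push Not at ha hb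
  -- the edges avoiding `a` and `b` give a triangle `a b c`
  obtain ⟨c, hbc, hca⟩ : ∃ c, G.Adj b c ∧ c ≠ a := by
    obtain ⟨p, q, hpq, hpa, hqa⟩ := ha
    rcases hmeet a b p q hab hpq with h | h | rfl | rfl
    exacts [absurd h.symm hpa, absurd h.symm hqa, ⟨q, hpq, hqa⟩, ⟨p, hpq.symm, hpa⟩]
  have hac : G.Adj a c := by
    obtain ⟨p, q, hpq, hpb, hqb⟩ := hb
    obtain ⟨d, had, hdb⟩ : ∃ d, G.Adj a d ∧ d ≠ b := by
      rcases hmeet b a p q hab.symm hpq with h | h | rfl | rfl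
      exacts [absurd h.symm hpb, absurd h.symm hqb, ⟨q, hpq, hqb⟩, ⟨p, hpq.symm, hpb⟩]
    rcases hmeet b c a d hbc had with h | h | h | rfl
    exacts [absurd h hab.ne', absurd h hdb.symm, absurd h hca, had]
  refine ⟨a, fun u hua => ?_⟩
  by_cases hub : u = b
  · exact hub ▸ hab
  by_cases huc : u = c
  · exact huc ▸ hac
  obtain ⟨w, huw⟩ := hG.exists_adj_of_ne hua
  exfalso
  rcases hmeet u w b c huw hbc with h | h | rfl | rfl
  · exact hub h
  · exact huc h
  · rcases hmeet u w a c huw hac with h | h | h | h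
    exacts [hua h, huc h, hab.ne h.symm, hbc.ne h]
  · rcases hmeet u w a b huw hab with h | h | h | h
    exacts [hua h, hub h, hac.ne h.symm, hbc.ne h.symm]

lemma Walk.IsPath.three_le_length {u w a b a' b' : V} {p : G.Walk u w} (hp : p.IsPath)
    (he : s(a, b) ∈ p.edges) (he' : s(a', b') ∈ p.edges) (hab : a ≠ b) (ha'b' : a' ≠ b')
    (h₁ : a ≠ a') (h₂ : a ≠ b') (h₃ : b ≠ a') (h₄ : b ≠ b') : 3 ≤ p.length := by
  classical
  have hsub : ({a, b, a', b'} : Finset V) ⊆ p.support.toFinset := by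
    simp only [Finset.insert_subset_iff, Finset.singleton_subset_iff, List.mem_toFinset]
    exact ⟨p.fst_mem_support_of_mem_edges he, p.snd_mem_support_of_mem_edges he,
      p.fst_mem_support_of_mem_edges he', p.snd_mem_support_of_mem_edges he'⟩
  have hcard : #({a, b, a', b'} : Finset V) = 4 := by
    rw [card_insert_of_notMem (by simp [hab, h₁, h₂]), card_insert_of_notMem (by simp [h₃, h₄]),
      card_pair ha'b']
  have := card_le_card hsub
  rw [hcard, List.toFinset_card_of_nodup hp.support_nodup, Walk.length_support] at this
  omega

variable {c : Sym2 V → ℕ}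

lemma Adj.exists_isPath_length_filter_eq_one {u w : V} (h : G.Adj u w) :
    ∃ p : G.Walk u w, p.IsPath ∧ ∃ col, (p.edges.filter (fun e => c e = col)).length = 1 :=
  ⟨h.toWalk, by simp [h.ne], c s(u, w), by simp⟩

lemma isCFConnColoring_of_forall_adj {v : V} (hv : ∀ u, u ≠ v → G.Adj v u)
    (hc : ∀ u w, u ≠ v → w ≠ v → u ≠ w → ¬ G.Adj u w → c s(u, v) ≠ c s(v, w)) :
    IsCFConnColoring G c := by
  intro u w huw
  by_cases hadj : G.Adj u w
  · exact hadj.exists_isPath_length_filter_eq_one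
  have hu : u ≠ v := by rintro rfl; exact hadj (hv w huw.symm)
  have hw : w ≠ v := by rintro rfl; exact hadj (hv u hu).symm
  refine ⟨.cons (hv u hu).symm (hv w hw).toWalk, ?_, c s(u, v), ?_⟩
  · simp [Walk.cons_isPath_iff, hu, huw, hw.symm]
  · simp [(hc u w hu hw huw hadj).symm]

lemma isCFConnColoring_of_le {H : SimpleGraph V} (hHG : H ≤ G) (hH : H.Connected)
    {a b a' b' : V} (hab : H.Adj a b) (ha'b' : H.Adj a' b')
    (h₁ : a ≠ a') (h₂ : a ≠ b') (h₃ : b ≠ a') (h₄ : b ≠ b')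
    (hc : ∀ e ∈ H.edgeSet, ∀ f ∈ H.edgeSet, c e = c f → e = f ∨ s(e, f) = s(s(a, b), s(a', b'))) :
    IsCFConnColoring G c := by
  intro u w huw
  obtain ⟨p, hp⟩ := (hH.preconnected u w).exists_isPath
  refine ⟨p.mapLe hHG, hp.mapLe hHG, ?_⟩
  rw [Walk.edges_mapLe_eq_edges]
  refine List.exists_length_filter_eq_one hp.edges_nodup
    (mt Walk.edges_eq_nil.1 (Walk.not_nil_of_ne huw))
    (fun e he f hf => hc e (p.edges_subset_edgeSet he) f (p.edges_subset_edgeSet hf))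
    fun he he' => ?_
  rw [Walk.length_edges]
  exact hp.three_le_length he he' hab.ne ha'b'.ne h₁ h₂ h₃ h₄

end SimpleGraph

lemma indepNum_eq_simpleGraph_indepNum {V : Type*} [Fintype V] (G : SimpleGraph V) :
    _root_.indepNum G = G.indepNum := by
  simp only [_root_.indepNum, SimpleGraph.indepNum, isNIndepSet_iff, IsIndepSet]

namespace IsStarCenter

variable {V : Type*} {G : SimpleGraph V} {v : V}

lemma adj_center (hv : IsStarCenter G v) {u : V} (hu : u ≠ v) : G.Adj v u :=
  (hv v u).2 ⟨Or.inl rfl, hu.symm⟩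

lemma eq_or_eq_of_adj (hv : IsStarCenter G v) {x y : V} (h : G.Adj x y) : x = v ∨ y = v :=
  ((hv x y).1 h).1

lemma edges_eq_of_isPath (hv : IsStarCenter G v) {x y : V} (hx : x ≠ v) (hy : y ≠ v)
    (hxy : x ≠ y) {p : G.Walk x y} (hp : p.IsPath) : p.edges = [s(x, v), s(v, y)] := by
  cases p with
  | nil => exact absurd rfl hxy
  | cons h q =>
    obtain rfl := (hv.eq_or_eq_of_adj h).resolve_left hx
    cases q with
    | nil => exact absurd rfl hy
    | cons h' r =>
      cases r with
      | nil => rfl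
      | cons h'' r' =>
        obtain rfl := (hv.eq_or_eq_of_adj h'').resolve_left h'.ne'
        simp [Walk.cons_isPath_iff] at hp

lemma card_sub_one_le [Fintype V] (hv : IsStarCenter G v) {c : Sym2 V → ℕ} {k : ℕ}
    (hck : ∀ e, c e < k) (hc : IsCFConnColoring G c) : Fintype.card V - 1 ≤ k := by
  classical
  have hinj : Set.InjOn (fun u => c s(u, v)) (univ.erase v : Finset V) := by
    intro x hx y hy hcxy
    by_contra hxy
    obtain ⟨p, hp, col, hcol⟩ := hc x y hxy
    rw [hv.edges_eq_of_isPath (ne_of_mem_erase hx) (ne_of_mem_erase hy) hxy hp,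
      Sym2.eq_swap (a := v)] at hcol
    by_cases h : c s(x, v) = col <;> simp_all [List.filter_cons]
  simpa [card_erase_of_mem] using
    card_le_card_of_injOn (t := range k) _ (fun u _ => by simpa using hck _) hinj

lemma exists_coloring [Fintype V] (hv : IsStarCenter G v) (hn : 2 ≤ Fintype.card V) :
    ∃ c : Sym2 V → ℕ, (∀ e, c e < Fintype.card V - 1) ∧ IsCFConnColoring G c := by
  classical
  set S := (univ.erase v).image (fun u => s(v, u))
  have hS : #S = Fintype.card V - 1 := by
    rw [card_image_of_injective _ fun _ _ => Sym2.congr_right.1, card_erase_of_mem (mem_univ v),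
      card_univ]
  obtain ⟨φ, hφlt, hφ⟩ := S.exists_injOn_lt_card (by rw [← card_pos, hS]; omega)
  refine ⟨φ, fun e => hS ▸ hφlt e,
    isCFConnColoring_of_forall_adj (fun u hu => hv.adj_center hu) fun u w hu hw huw _ h => huw ?_⟩
  rw [Sym2.eq_swap] at h
  exact Sym2.congr_right.1
    (hφ (mem_image_of_mem _ (by simp [hu])) (mem_image_of_mem _ (by simp [hw])) h)

lemma cfcNum_eq [Fintype V] (hv : IsStarCenter G v) (hn : 2 ≤ Fintype.card V) :
    cfcNum G = Fintype.card V - 1 := by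
  obtain ⟨c, hc⟩ := hv.exists_coloring hn
  exact le_antisymm (Nat.sInf_le ⟨c, hc⟩)
    (le_csInf ⟨_, c, hc⟩ fun k ⟨_, hck, hc'⟩ => hv.card_sub_one_le hck hc')

lemma indepNum_eq [Fintype V] (hv : IsStarCenter G v) (hn : 2 ≤ Fintype.card V) :
    G.indepNum = Fintype.card V - 1 := by
  classical
  have : Nontrivial V := Fintype.one_lt_card_iff_nontrivial.1 hn
  obtain ⟨u, hu⟩ := exists_ne v
  apply le_antisymm
  · obtain ⟨s, hs⟩ := G.exists_isNIndepSet_indepNum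
    have hsu : s ≠ univ := fun h =>
      hs.isIndepSet (by simp [h]) (by simp [h]) hu.symm (hv.adj_center hu)
    rw [← hs.card_eq, ← card_univ]
    exact Nat.le_sub_one_of_lt (card_lt_card (ssubset_univ_iff.2 hsu))
  · have : G.IsIndepSet (univ.erase v : Finset V) := fun x hx y hy _ hxy => by
      simp only [coe_erase, coe_univ, Set.mem_sdiff, Set.mem_univ, Set.mem_singleton_iff,
        true_and] at hx hy
      rcases hv.eq_or_eq_of_adj hxy with rfl | rfl
      exacts [hx rfl, hy rfl]
    simpa [card_erase_of_mem] using this.card_le_indepNum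

end IsStarCenter

namespace SimpleGraph

variable {V : Type*} [Fintype V] {G : SimpleGraph V}

lemma Connected.exists_isStarCenter_of_indepNum_eq (hG : G.Connected)
    (h : G.indepNum = Fintype.card V - 1) : ∃ v, IsStarCenter G v := by
  classical
  obtain ⟨s, hs⟩ := G.exists_isNIndepSet_indepNum
  have : #(univ \ s) = 1 := by
    have := Fintype.card_pos_iff.2 hG.nonempty
    rw [card_univ_sdiff, hs.card_eq, h]
    omega
  obtain ⟨v, hv⟩ := card_eq_one.1 this
  have hmem : ∀ x, x ≠ v → x ∈ s := fun x hx => by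
    by_contra hxs
    exact hx (mem_singleton.1 (hv ▸ mem_sdiff.2 ⟨mem_univ x, hxs⟩))
  refine ⟨v, hG.isStarCenter_of_forall_adj_imp fun x y hxy => ?_⟩
  by_contra! h'
  exact hs.isIndepSet (hmem x h'.1) (hmem y h'.2) hxy.ne hxy

lemma exists_coloring_of_forall_adj_of_adj {v x y : V} (hv : ∀ u, u ≠ v → G.Adj v u)
    (hxy : G.Adj x y) (hx : x ≠ v) (hy : y ≠ v) :
    ∃ c : Sym2 V → ℕ, (∀ e, c e < Fintype.card V - 2) ∧ IsCFConnColoring G c := by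
  classical
  set S := (univ \ {v, y}).image (fun u => s(v, u))
  have hS : #S = Fintype.card V - 2 := by
    rw [card_image_of_injective _ fun _ _ => Sym2.congr_right.1, card_univ_sdiff,
      card_pair hy.symm]
  have hmem : ∀ u, u ≠ v → s(v, u) ∈ insert s(v, y) S := by
    intro u hu
    by_cases huy : u = y
    · simp [huy]
    · exact mem_insert_of_mem (mem_image_of_mem _ (by simp [hu, huy]))
  obtain ⟨c, hclt, hc⟩ :=
    S.exists_lt_card_eq_or_pair (e₁ := s(v, x)) (mem_image_of_mem _ (by simp [hx, hxy.ne])) s(v, y)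
  refine ⟨c, fun e => hS ▸ hclt e,
    isCFConnColoring_of_forall_adj hv fun u w hu hw huw hadj h => ?_⟩
  rw [Sym2.eq_swap] at h
  rcases hc _ (hmem u hu) _ (hmem w hw) h with h | h
  · exact huw (Sym2.congr_right.1 h)
  · rcases Sym2.eq_iff.1 h with ⟨h₁, h₂⟩ | ⟨h₁, h₂⟩ <;>
      rw [Sym2.congr_right] at h₁ h₂ <;> subst h₁ h₂
    exacts [hadj hxy, hadj hxy.symm]

lemma IsTree.exists_coloring_of_adj_of_adj {T : SimpleGraph V} (hT : T.IsTree) (hTG : T ≤ G)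
    {a b a' b' : V} (hab : T.Adj a b) (ha'b' : T.Adj a' b')
    (h₁ : a ≠ a') (h₂ : a ≠ b') (h₃ : b ≠ a') (h₄ : b ≠ b') :
    ∃ c : Sym2 V → ℕ, (∀ e, c e < Fintype.card V - 2) ∧ IsCFConnColoring G c := by
  classical
  have he₂ : s(a', b') ∈ T.edgeFinset := by simpa using ha'b'
  have hne : s(a, b) ≠ s(a', b') := fun h => by
    rcases Sym2.eq_iff.1 h with ⟨h, -⟩ | ⟨h, -⟩
    exacts [h₁ h, h₂ h]
  have hS : #(T.edgeFinset.erase s(a', b')) = Fintype.card V - 2 := by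
    have := hT.card_edgeFinset
    rw [card_erase_of_mem he₂]
    omega
  obtain ⟨c, hclt, hc⟩ := (T.edgeFinset.erase s(a', b')).exists_lt_card_eq_or_pair
    (mem_erase.2 ⟨hne, by simpa using hab⟩) s(a', b')
  rw [insert_erase he₂] at hc
  exact ⟨c, fun e => hS ▸ hclt e, isCFConnColoring_of_le hTG hT.connected hab ha'b' h₁ h₂ h₃ h₄
    fun e he f hf => hc e (by simpa using he) f (by simpa using hf)⟩

lemma Connected.exists_coloring_of_not_isStarCenter (hG : G.Connected)
    (hns : ¬ ∃ v, IsStarCenter G v) :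
    ∃ c : Sym2 V → ℕ, (∀ e, c e < Fintype.card V - 2) ∧ IsCFConnColoring G c := by
  obtain ⟨T, hTG, hT⟩ := hG.exists_isTree_le
  by_cases hmeet : ∀ a b a' b', T.Adj a b → T.Adj a' b' → a = a' ∨ a = b' ∨ b = a' ∨ b = b'
  · obtain ⟨v, hv⟩ := hT.connected.exists_forall_adj_of_edges_meet hmeet
    obtain ⟨x, y, hxy, hx, hy⟩ : ∃ x y, G.Adj x y ∧ x ≠ v ∧ y ≠ v := by
      by_contra! h
      exact hns ⟨v, hG.isStarCenter_of_forall_adj_imp fun x y hxy =>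
        or_iff_not_imp_left.2 (h x y hxy)⟩
    exact exists_coloring_of_forall_adj_of_adj (fun u hu => hTG (hv u hu)) hxy hx hy
  · push Not at hmeet
    obtain ⟨a, b, a', b', hab, ha'b', h₁, h₂, h₃, h₄⟩ := hmeet
    exact hT.exists_coloring_of_adj_of_adj hTG hab ha'b' h₁ h₂ h₃ h₄

lemma Connected.cfcNum_le_card_sub_two (hG : G.Connected) (hns : ¬ ∃ v, IsStarCenter G v) :
    cfcNum G ≤ Fintype.card V - 2 :=
  Nat.sInf_le (hG.exists_coloring_of_not_isStarCenter hns)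

end SimpleGraph

theorem stmt2 {V : Type*} [Fintype V] (G : SimpleGraph V) (hG : G.Connected)
    (hn : 2 ≤ Fintype.card V) :
    ((cfcNum G = Fintype.card V - 1 ↔ _root_.indepNum G = Fintype.card V - 1) ∧
     (cfcNum G = Fintype.card V - 1 ↔
        ∃ v : V, ∀ x y : V, G.Adj x y ↔ (x = v ∨ y = v) ∧ x ≠ y)) := by
  have hcfc : cfcNum G = Fintype.card V - 1 ↔ ∃ v, IsStarCenter G v := by
    refine ⟨fun h => by_contra fun hns => ?_, fun ⟨v, hv⟩ => hv.cfcNum_eq hn⟩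
    have := hG.cfcNum_le_card_sub_two hns
    omega
  have hindep : _root_.indepNum G = Fintype.card V - 1 ↔ ∃ v, IsStarCenter G v := by
    rw [indepNum_eq_simpleGraph_indepNum]
    exact ⟨hG.exists_isStarCenter_of_indepNum_eq, fun ⟨v, hv⟩ => hv.indepNum_eq hn⟩
  exact ⟨hcfc.trans hindep.symm, hcfc⟩
end

section
/- Let Q_k (k ≥ 3) be the tree obtained from the subdivided star H_k (K_{1,k} with every edge subdivided once) by attaching a pendant edge to each of k−2 of its leaves. Then cfc(Q_k) = k. -/
open SimpleGraph

/-- Vertices of `Q_k`: center `none`, and on leg `i` vertices `some (i,j)`;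
legs `i < k-2` have length 3 (a pendant edge added to the leaf), others length 2. -/
def Qvert (k : ℕ) : Type :=
  {x : Option (Fin k × Fin 3) // ∀ p : Fin k × Fin 3, x = some p → ((p.2 : ℕ) ≤ 1 ∨ (p.1 : ℕ) < k - 2)}

/-- `Q_k`: the spider `H_k` with a pendant edge attached to each of `k-2` of its leaves. -/
def Qgraph (k : ℕ) : SimpleGraph (Qvert k) :=
  SimpleGraph.fromRel (fun a b =>
    (a.1 = none ∧ ∃ i : Fin k, b.1 = some (i, 0)) ∨
    (∃ i : Fin k, a.1 = some (i, 0) ∧ b.1 = some (i, 1)) ∨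
    (∃ i : Fin k, a.1 = some (i, 1) ∧ b.1 = some (i, 2)))

/-!
Lower bound: two neighbours of the center are joined only through the center, so the `k` central
edges must get pairwise distinct colors.

Upper bound: color the edge between depths `d` and `d + 1` of leg `i` by `(i + d) mod k`. A path
inside one leg (or from the center) sees consecutive residues, which are distinct since `3 ≤ k`. A
path between legs `i ≠ l` sees a run of residues starting at `i` followed by one starting at `l`;
two runs of length at most `k` have the same residues only if they are empty, full, or start at the
same residue. Full runs would need `k = 3` and two legs of length 3, but `Q_3` has only one. So some
color lies in exactly one of the runs and occurs exactly once on the path.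
-/

theorem List.exists_count_append_eq_one {α : Type*} [DecidableEq α] {l₁ l₂ : List α}
    (h₁ : l₁.Nodup) (h₂ : l₂.Nodup) (h : ¬(l₁ ⊆ l₂ ∧ l₂ ⊆ l₁)) :
    ∃ x, (l₁ ++ l₂).count x = 1 := by
  simp only [List.subset_def, not_and_or, not_forall] at h
  rcases h with ⟨x, hx₁, hx₂⟩ | ⟨x, hx₂, hx₁⟩
  · exact ⟨x, by rw [List.count_append, List.count_eq_one_of_mem h₁ hx₁,
      List.count_eq_zero_of_not_mem hx₂]⟩
  · exact ⟨x, by rw [List.count_append, List.count_eq_one_of_mem h₂ hx₂,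
      List.count_eq_zero_of_not_mem hx₁]⟩

def residueRun (k i a : ℕ) : List ℕ := (List.range a).map fun j => (i + j) % k

section ResidueRun

variable {k i l a b x : ℕ}

theorem mem_residueRun : x ∈ residueRun k i a ↔ ∃ j < a, (i + j) % k = x := by
  simp [residueRun]

theorem residueRun_nodup (ha : a ≤ k) : (residueRun k i a).Nodup := by
  refine List.nodup_range.map_on fun j hj j' hj' h => ?_
  rw [List.mem_range] at hj hj'
  have := Nat.ModEq.add_left_cancel' i h
  rwa [Nat.ModEq, Nat.mod_eq_of_lt (by omega), Nat.mod_eq_of_lt (by omega)] at this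

theorem residueRun_mutual_subset (ha : a ≤ k) (hb : b ≤ k)
    (h₁ : residueRun k i a ⊆ residueRun k l b) (h₂ : residueRun k l b ⊆ residueRun k i a) :
    a = b ∧ (a = 0 ∨ a = k ∨ i % k = l % k) := by
  have hab : a = b := by
    have := ((residueRun_nodup ha).subperm h₁).length_le
    have := ((residueRun_nodup hb).subperm h₂).length_le
    simp only [residueRun, List.length_map, List.length_range] at *
    omega
  subst hab
  refine ⟨rfl, ?_⟩
  by_contra! hne
  obtain ⟨t, ht, hlt⟩ := mem_residueRun.1 (h₁ (mem_residueRun.2 ⟨0, by omega, rfl⟩))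
  have ht0 : t ≠ 0 := by rintro rfl; exact hne.2.2 (by simpa using hlt.symm)
  -- `l + a` lies `a - t` steps after `i` but `a` steps after `l`, and `0 < a < k`.
  have hla : (i + (a - t)) % k = (l + a) % k := by
    have : l + t + (a - t) ≡ i + (a - t) [MOD k] := Nat.ModEq.add_right _ hlt
    rw [show l + t + (a - t) = l + a by omega] at this
    exact this.symm
  obtain ⟨j, hj, hlj⟩ := mem_residueRun.1 (h₁ (mem_residueRun.2 ⟨a - t, by omega, hla⟩))
  have := Nat.ModEq.add_left_cancel' l hlj
  rw [Nat.ModEq, Nat.mod_eq_of_lt (by omega), Nat.mod_eq_of_lt (by omega)] at this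
  omega

end ResidueRun

section CFConnection

variable {V : Type*} {G : SimpleGraph V} {c : Sym2 V → ℕ} {u v : V}

def CFJoined (G : SimpleGraph V) (c : Sym2 V → ℕ) (u v : V) : Prop :=
  ∃ p : G.Walk u v, p.IsPath ∧ ∃ col : ℕ, (p.edges.filter (fun e => c e = col)).length = 1

theorem length_filter_edges_eq_count (l : List (Sym2 V)) (col : ℕ) :
    (l.filter (fun e => c e = col)).length = (l.map c).count col := by
  rw [List.count, List.countP_map, List.countP_eq_length_filter]
  rfl

theorem CFJoined.of_isPath {p : G.Walk u v} (hp : p.IsPath)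
    (h : ∃ col, (p.edges.map c).count col = 1) : CFJoined G c u v := by
  obtain ⟨col, hcol⟩ := h
  exact ⟨p, hp, col, by rw [length_filter_edges_eq_count, hcol]⟩

theorem CFJoined.symm (h : CFJoined G c u v) : CFJoined G c v u := by
  obtain ⟨p, hp, col, hcol⟩ := h
  exact ⟨p.reverse, hp.reverse, col, by rwa [Walk.edges_reverse, List.filter_reverse,
    List.length_reverse]⟩

theorem CFJoined.of_nodup {p : G.Walk u v} (hp : p.IsPath) (huv : u ≠ v)
    (hnd : (p.edges.map c).Nodup) : CFJoined G c u v := by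
  obtain ⟨e, he⟩ : ∃ e, e ∈ p.edges := by
    cases p with
    | nil => exact absurd rfl huv
    | cons h q => exact ⟨_, List.mem_cons_self⟩
  exact .of_isPath hp ⟨c e, List.count_eq_one_of_mem hnd (List.mem_map_of_mem he)⟩

theorem CFJoined.of_adj (h : G.Adj u v) : CFJoined G c u v :=
  .of_nodup (Walk.IsPath.of_adj h) h.ne (by simp)

theorem CFJoined.reverse_append {r : V} {p : G.Walk r u} {q : G.Walk r v}
    (hp : p.IsPath) (hq : q.IsPath) (hdisj : p.support.tail.Disjoint q.support.tail)
    (hcol : ∃ col, (p.edges.map c ++ q.edges.map c).count col = 1) : CFJoined G c u v := by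
  have hq' := hq.support_nodup
  rw [← Walk.cons_tail_support q, List.nodup_cons] at hq'
  refine .of_isPath (p := p.reverse.append q) (.mk' ?_) ?_
  · rw [Walk.support_append, Walk.support_reverse, List.nodup_append]
    refine ⟨List.nodup_reverse.2 hp.support_nodup, hq'.2, fun x hx y hy => ?_⟩
    rw [List.mem_reverse, ← Walk.cons_tail_support p, List.mem_cons] at hx
    rintro rfl
    rcases hx with rfl | hx
    · exact hq'.1 hy
    · exact hdisj hx hy
  · simpa [Walk.edges_append, Walk.edges_reverse] using hcol

theorem IsCFConnColoring.ne_of_edges_eq {e₁ e₂ : Sym2 V} (hc : IsCFConnColoring G c)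
    (huv : u ≠ v) (h : ∀ p : G.Walk u v, p.IsPath → p.edges = [e₁, e₂]) : c e₁ ≠ c e₂ := by
  obtain ⟨p, hp, col, hcol⟩ := hc u v huv
  rw [h p hp] at hcol
  intro heq
  by_cases h₁ : c e₁ = col <;> simp_all

end CFConnection

namespace Qvert

variable {k : ℕ}

def ctr : Qvert k := ⟨none, by simp⟩

/-- `v1 i`, `v2 i`, `v3 i h` are the vertices at distance 1, 2, 3 from the center on leg `i`. -/
def v1 (i : Fin k) : Qvert k := ⟨some (i, 0), by simp⟩

def v2 (i : Fin k) : Qvert k := ⟨some (i, 1), by simp⟩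

def v3 (i : Fin k) (hi : (i : ℕ) < k - 2) : Qvert k := ⟨some (i, 2), by simp [hi]⟩

/-- The leg index, with junk value `0` at the center. -/
def leg (v : Qvert k) : ℕ := v.1.elim 0 fun p => p.1

def depth (v : Qvert k) : ℕ := v.1.elim 0 fun p => p.2 + 1

@[ext] theorem ext {a b : Qvert k} (h : a.1 = b.1) : a = b := Subtype.ext h

@[simp] theorem val_ctr : (ctr : Qvert k).1 = none := rfl
@[simp] theorem val_v1 (i : Fin k) : (v1 i).1 = some (i, 0) := rfl
@[simp] theorem val_v2 (i : Fin k) : (v2 i).1 = some (i, 1) := rfl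
@[simp] theorem val_v3 (i : Fin k) (hi) : (v3 i hi).1 = some (i, 2) := rfl

@[simp] theorem leg_ctr : (ctr : Qvert k).leg = 0 := rfl
@[simp] theorem leg_v1 (i : Fin k) : (v1 i).leg = i := rfl
@[simp] theorem leg_v2 (i : Fin k) : (v2 i).leg = i := rfl
@[simp] theorem leg_v3 (i : Fin k) (hi) : (v3 i hi).leg = i := rfl
@[simp] theorem depth_ctr : (ctr : Qvert k).depth = 0 := rfl
@[simp] theorem depth_v1 (i : Fin k) : (v1 i).depth = 1 := rfl
@[simp] theorem depth_v2 (i : Fin k) : (v2 i).depth = 2 := rfl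
@[simp] theorem depth_v3 (i : Fin k) (hi) : (v3 i hi).depth = 3 := rfl

theorem eq_ctr_or (v : Qvert k) :
    v = ctr ∨ (∃ i, v = v1 i) ∨ (∃ i, v = v2 i) ∨ ∃ i hi, v = v3 i hi := by
  obtain ⟨_ | ⟨i, j⟩, hv⟩ := v
  · exact Or.inl rfl
  · fin_cases j
    · exact Or.inr (Or.inl ⟨i, rfl⟩)
    · exact Or.inr (Or.inr (Or.inl ⟨i, rfl⟩))
    · exact Or.inr (Or.inr (Or.inr ⟨i, by simpa using hv _ rfl, rfl⟩))

theorem adj_iff {a b : Qvert k} : (Qgraph k).Adj a b ↔ a.1 ≠ b.1 ∧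
    (((a.1 = none ∧ ∃ i : Fin k, b.1 = some (i, 0)) ∨
      (∃ i : Fin k, a.1 = some (i, 0) ∧ b.1 = some (i, 1)) ∨
      (∃ i : Fin k, a.1 = some (i, 1) ∧ b.1 = some (i, 2))) ∨
    ((b.1 = none ∧ ∃ i : Fin k, a.1 = some (i, 0)) ∨
      (∃ i : Fin k, b.1 = some (i, 0) ∧ a.1 = some (i, 1)) ∨
      (∃ i : Fin k, b.1 = some (i, 1) ∧ a.1 = some (i, 2)))) := by
  rw [Qgraph, fromRel_adj, Ne, Qvert.ext_iff]

theorem eq_of_adj_v3 {i : Fin k} {hi} {b : Qvert k} (h : (Qgraph k).Adj (v3 i hi) b) :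
    b = v2 i := by
  simp_all [adj_iff, Qvert.ext_iff]

theorem eq_of_adj_v2 {i : Fin k} {b : Qvert k} (h : (Qgraph k).Adj (v2 i) b) :
    b = v1 i ∨ ∃ hi, b = v3 i hi := by
  simp [adj_iff, Qvert.ext_iff] at h ⊢
  rcases h.2 with h | h
  · exact Or.inr ⟨by simpa using b.2 _ h, h⟩
  · exact Or.inl h

theorem eq_of_adj_v1 {i : Fin k} {b : Qvert k} (h : (Qgraph k).Adj (v1 i) b) :
    b = ctr ∨ b = v2 i := by
  simp [adj_iff, Qvert.ext_iff] at h ⊢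
  exact h.2.symm

theorem exists_eq_v1_of_adj_ctr {b : Qvert k} (h : (Qgraph k).Adj ctr b) : ∃ i, b = v1 i := by
  simp_all [adj_iff, Qvert.ext_iff]

theorem adj_ctr_v1 (i : Fin k) : (Qgraph k).Adj ctr (v1 i) := by simp [adj_iff]

theorem adj_v1_v2 (i : Fin k) : (Qgraph k).Adj (v1 i) (v2 i) := by simp [adj_iff]

theorem adj_v2_v3 (i : Fin k) (hi) : (Qgraph k).Adj (v2 i) (v3 i hi) := by simp [adj_iff]

end Qvert

namespace Qvert

variable {k : ℕ}

theorem eq_v2_or_v3_of_isPath {i : Fin k} {v : Qvert k} {p : (Qgraph k).Walk (v2 i) v}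
    (hp : p.IsPath) (h : v1 i ∉ p.support) : v = v2 i ∨ ∃ hi, v = v3 i hi := by
  cases p with
  | nil => exact Or.inl rfl
  | cons hadj q =>
    rcases eq_of_adj_v2 hadj with rfl | ⟨hi, rfl⟩
    · simp at h
    · cases q with
      | nil => exact Or.inr ⟨hi, rfl⟩
      | cons hadj' q =>
        obtain rfl := eq_of_adj_v3 hadj'
        simp [Walk.cons_isPath_iff] at hp

theorem edges_eq_of_isPath {i j : Fin k} (hij : i ≠ j) {p : (Qgraph k).Walk (v1 i) (v1 j)}
    (hp : p.IsPath) : p.edges = [s(v1 i, ctr), s(ctr, v1 j)] := by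
  cases p with
  | nil => exact absurd rfl hij
  | cons h q =>
    rw [Walk.cons_isPath_iff] at hp
    rcases eq_of_adj_v1 h with rfl | rfl
    · cases q with
      | cons h' q =>
        obtain ⟨l, rfl⟩ := exists_eq_v1_of_adj_ctr h'
        rw [Walk.cons_isPath_iff] at hp
        cases q with
        | nil => rfl
        | cons h'' q =>
          rcases eq_of_adj_v1 h'' with rfl | rfl
          · simp at hp
          · rw [Walk.cons_isPath_iff] at hp
            rcases eq_v2_or_v3_of_isPath hp.1.1.1 hp.1.1.2 with h | ⟨_, h⟩ <;>
              simp [Qvert.ext_iff] at h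
    · rcases eq_v2_or_v3_of_isPath hp.1 hp.2 with h | ⟨_, h⟩ <;> simp [Qvert.ext_iff] at h

theorem le_of_isCFConnColoring {n : ℕ} {c : Sym2 (Qvert k) → ℕ} (hc : ∀ e, c e < n)
    (hcf : IsCFConnColoring (Qgraph k) c) : k ≤ n := by
  have hinj : Function.Injective fun i : Fin k => c s(ctr, v1 i) := by
    intro i j hcij
    by_contra hij
    refine hcf.ne_of_edges_eq (by simpa [Qvert.ext_iff]) (fun p hp => edges_eq_of_isPath hij hp) ?_
    rwa [Sym2.eq_swap]
  simpa using Finset.card_le_card_of_injOn (s := Finset.univ) _ (fun i _ => Finset.mem_range.2 (hc _)) hinj.injOn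

end Qvert

namespace Qvert

variable {k : ℕ} {u v : Qvert k}

variable (k) in
/-- The edge between depths `d` and `d + 1` on leg `i` gets color `(i + d) % k`; the larger leg
index is `i` because the center has leg `0`. -/
def coloring : Sym2 (Qvert k) → ℕ :=
  Sym2.lift ⟨fun a b => (max a.leg b.leg + min a.depth b.depth) % k,
    fun a b => by simp only [max_comm, min_comm]⟩

@[simp] theorem coloring_mk (a b : Qvert k) :
    coloring k s(a, b) = (max a.leg b.leg + min a.depth b.depth) % k := rfl

theorem coloring_lt (hk : 0 < k) (e : Sym2 (Qvert k)) : coloring k e < k := by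
  induction e using Sym2.ind with
  | _ a b => exact Nat.mod_lt _ hk

theorem depth_le_three (v : Qvert k) : v.depth ≤ 3 := by
  rcases eq_ctr_or v with rfl | ⟨i, rfl⟩ | ⟨i, rfl⟩ | ⟨i, hi, rfl⟩ <;> simp

theorem depth_pos (hv : v ≠ ctr) : 0 < v.depth := by
  rcases eq_ctr_or v with rfl | ⟨i, rfl⟩ | ⟨i, rfl⟩ | ⟨i, hi, rfl⟩ <;> simp_all

theorem leg_lt (hv : v ≠ ctr) : v.leg < k := by
  rcases eq_ctr_or v with rfl | ⟨i, rfl⟩ | ⟨i, rfl⟩ | ⟨i, hi, rfl⟩ <;> simp_all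

theorem leg_lt_of_depth_eq_three (h : v.depth = 3) : v.leg < k - 2 := by
  rcases eq_ctr_or v with rfl | ⟨i, rfl⟩ | ⟨i, rfl⟩ | ⟨i, hi, rfl⟩ <;> simp_all

theorem exists_walk_from_ctr (v : Qvert k) : ∃ w : (Qgraph k).Walk ctr v, w.IsPath ∧
    w.edges.map (coloring k) = residueRun k v.leg v.depth ∧ ∀ x ∈ w.support.tail, x.leg = v.leg := by
  rcases eq_ctr_or v with rfl | ⟨i, rfl⟩ | ⟨i, rfl⟩ | ⟨i, hi, rfl⟩
  · exact ⟨.nil, by simp, by simp [residueRun], by simp⟩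
  · refine ⟨.cons (adj_ctr_v1 i) .nil, ?_, ?_, by simp⟩ <;>
      simp [Walk.cons_isPath_iff, residueRun, Qvert.ext_iff]
  · refine ⟨.cons (adj_ctr_v1 i) (.cons (adj_v1_v2 i) .nil), ?_, ?_, by simp⟩ <;>
      simp [Walk.cons_isPath_iff, residueRun, List.range_succ, Qvert.ext_iff]
  · refine ⟨.cons (adj_ctr_v1 i) (.cons (adj_v1_v2 i) (.cons (adj_v2_v3 i hi) .nil)), ?_, ?_, by simp⟩ <;>
      simp [Walk.cons_isPath_iff, residueRun, List.range_succ, Qvert.ext_iff]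

variable (hk : 3 ≤ k)
include hk

theorem cfJoined_ctr (hv : v ≠ ctr) : CFJoined (Qgraph k) (coloring k) ctr v := by
  obtain ⟨w, hw, hcol, -⟩ := exists_walk_from_ctr v
  exact .of_nodup hw (Ne.symm hv) (hcol ▸ residueRun_nodup ((depth_le_three v).trans hk))

theorem cfJoined_v1_v3 (i : Fin k) (hi : (i : ℕ) < k - 2) :
    CFJoined (Qgraph k) (coloring k) (v1 i) (v3 i hi) := by
  refine .of_nodup (p := .cons (adj_v1_v2 i) (.cons (adj_v2_v3 i hi) .nil))
    (by simp [Walk.cons_isPath_iff, Qvert.ext_iff]) (by simp [Qvert.ext_iff]) ?_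
  convert residueRun_nodup (i := i + 1) (show 2 ≤ k by omega) using 1
  simp [residueRun, List.range_succ, add_assoc]

theorem cfJoined_of_leg_eq (hu : u ≠ ctr) (hv : v ≠ ctr) (huv : u ≠ v) (h : u.leg = v.leg) :
    CFJoined (Qgraph k) (coloring k) u v := by
  rcases eq_ctr_or u with rfl | ⟨i, rfl⟩ | ⟨i, rfl⟩ | ⟨i, hi, rfl⟩ <;>
    rcases eq_ctr_or v with rfl | ⟨j, rfl⟩ | ⟨j, rfl⟩ | ⟨j, hj, rfl⟩ <;>
    simp only [leg_v1, leg_v2, leg_v3, Fin.val_inj] at h <;> subst_vars <;> try contradiction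
  · exact .of_adj (adj_v1_v2 _)
  · exact cfJoined_v1_v3 hk _ _
  · exact (CFJoined.of_adj (adj_v1_v2 _)).symm
  · exact .of_adj (adj_v2_v3 _ _)
  · exact (cfJoined_v1_v3 hk _ _).symm
  · exact (CFJoined.of_adj (adj_v2_v3 _ _)).symm

theorem cfJoined_of_leg_ne (hu : u ≠ ctr) (hv : v ≠ ctr) (h : u.leg ≠ v.leg) :
    CFJoined (Qgraph k) (coloring k) u v := by
  obtain ⟨p, hp, hpc, hpl⟩ := exists_walk_from_ctr u
  obtain ⟨q, hq, hqc, hql⟩ := exists_walk_from_ctr v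
  refine .reverse_append hp hq (fun x hxp hxq => h ((hpl x hxp).symm.trans (hql x hxq))) ?_
  have hu3 := depth_le_three u
  have hv3 := depth_le_three v
  rw [hpc, hqc]
  refine List.exists_count_append_eq_one (residueRun_nodup (by omega))
    (residueRun_nodup (by omega)) fun ⟨h₁, h₂⟩ => ?_
  obtain ⟨hd, h0 | hfull | hmod⟩ := residueRun_mutual_subset (by omega) (by omega) h₁ h₂
  · exact (depth_pos hu).ne' h0
  · -- both legs would have depth `3 = k`, forcing both leg indices below `k - 2 = 1`
    have := leg_lt_of_depth_eq_three (v := u) (by omega)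
    have := leg_lt_of_depth_eq_three (v := v) (by omega)
    omega
  · rw [Nat.mod_eq_of_lt (leg_lt hu), Nat.mod_eq_of_lt (leg_lt hv)] at hmod
    exact h hmod

theorem isCFConnColoring_coloring : IsCFConnColoring (Qgraph k) (coloring k) := by
  intro u v huv
  change CFJoined _ _ u v
  by_cases hu : u = ctr
  · subst hu
    exact cfJoined_ctr hk (Ne.symm huv)
  by_cases hv : v = ctr
  · subst hv
    exact (cfJoined_ctr hk huv).symm
  by_cases h : u.leg = v.leg
  · exact cfJoined_of_leg_eq hk hu hv huv h
  · exact cfJoined_of_leg_ne hk hu hv h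

end Qvert

theorem stmt7 (k : ℕ) (hk : 3 ≤ k) : cfcNum (Qgraph k) = k :=
  IsLeast.csInf_eq ⟨⟨Qvert.coloring k, Qvert.coloring_lt (by omega),
    Qvert.isCFConnColoring_coloring hk⟩, fun _ ⟨_, hc, hcf⟩ => Qvert.le_of_isCFConnColoring hc hcf⟩
end
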